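/- Let A be a class of graph-structures where for a counting minimal connected conjunctive query (H,X) with at least one free variable, counting answers to (H,X) is invariant under k-WL equivalence where k = tw(Γ(H',X')) for the counting minimal representative: specifically, if two graphs G and G' satisfy |Hom(T,G)| = |Hom(T,G')| for every graph T of treewidth at most the extension width etw(H,X), then |Ans((H,X),G)| = |Ans((H,X),G')|. -/

import Mathlib

/-- A tree decomposition of a simple graph `G`. -/
structure TreeDecomp {V : Type*} (G : SimpleGraph V) where
  /-- the index type of the decomposition tree -/
  ι : Type
  /-- the decomposition tree -/
  T : SimpleGraph ι
  /-- `T` is a tree -/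
  tree : T.IsTree
  /-- the bags -/
  bag : ι → Set V
  /-- (T1) every vertex occurs in some bag -/
  covers_vertex : ∀ v : V, ∃ t, v ∈ bag t
  /-- (T3) every edge is contained in some bag -/
  covers_edge : ∀ ⦃u v : V⦄, G.Adj u v → ∃ t, u ∈ bag t ∧ v ∈ bag t
  /-- (T2) for every vertex the set of bags containing it induces a connected subtree -/
  bags_connected : ∀ v : V, (T.induce {t | v ∈ bag t}).Connected

/-- `G` has a tree decomposition of width at most `k`. -/
def TreewidthAtMost {V : Type*} (G : SimpleGraph V) (k : ℕ) : Prop :=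
  ∃ D : TreeDecomp G, ∀ t, (D.bag t).ncard ≤ k + 1

/-- The treewidth of a (finite) simple graph: the least `k` such that `G` has a
tree decomposition of width `k`. -/
noncomputable def treewidth {V : Type*} (G : SimpleGraph V) : ℕ :=
  sInf {k | TreewidthAtMost G k}

/-- The extension `Γ(H,X)` of a conjunctive query `(H,X)`: the graph on `V(H)` whose
edges are those of `H` together with all pairs `{u,v}` of distinct vertices of `X`
such that some connected component of the induced subgraph `H[V(H)∖X]` is adjacent in
`H` to both `u` and `v`. -/
def extGraph {V : Type*} (H : SimpleGraph V) (X : Set V) : SimpleGraph V where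
  Adj u v := H.Adj u v ∨ (u ≠ v ∧ u ∈ X ∧ v ∈ X ∧
    ∃ (w₁ w₂ : ↥(Xᶜ)), H.Adj u ↑w₁ ∧ H.Adj v ↑w₂ ∧ (H.induce Xᶜ).Reachable w₁ w₂)
  symm := by
    constructor
    intro u v h
    rcases h with h | ⟨hne, hu, hv, w₁, w₂, h1, h2, h3⟩
    · exact Or.inl h.symm
    · exact Or.inr ⟨hne.symm, hv, hu, w₂, w₁, h2, h1, h3.symm⟩
  loopless := by
    constructor
    intro u h
    rcases h with h | ⟨hne, _⟩
    · exact H.irrefl h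
    · exact hne rfl

/-- The set of answers of the conjunctive query `(H,X)` in a graph `G`: maps
`a : X → V(G)` that extend to a graph homomorphism from `H` to `G`. -/
def Answers {V W : Type*} (H : SimpleGraph V) (X : Set V) (G : SimpleGraph W) :
    Set (↥X → W) :=
  {a | ∃ h : H →g G, ∀ x : ↥X, h ↑x = a x}


/-! Let `F_ℓ` be `ℓ` copies of `H` glued along `X`. A homomorphism `F_ℓ → G` is an assignment
`a : X → V(G)` together with `ℓ` extensions of `a` to homomorphisms `H → G`, so
`|Hom(F_ℓ, G)| = ∑_a e(a)^ℓ`, where `e(a)` is the number of extensions of `a`, while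
`|Ans((H,X), G)|` is the number of `a` with `e(a) ≠ 0`. Evaluating a polynomial `p` with
`p(0) = 0` and `p(j) = 1` for `1 ≤ j ≤ M` turns the power sums with `ℓ ≥ 1` into that number.

It remains to see `tw(F_ℓ) ≤ tw(Γ(H,X))`. In a tree decomposition of `Γ(H,X)` the neighbourhood
in `X` of a component `C` of `H - X` is a clique, so by the Helly property of subtrees it lies in
a single bag `t_C`. Hanging, for every copy and every node `r`, a fresh copy of the decomposition
tree at `r` that carries the components with `t_C = r` gives a decomposition of `F_ℓ` of the
same width. -/

section PowerSums

open Finset Polynomial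

lemma sum_eval_eq_sum_coeff_mul_sum_pow {A R : Type*} [Fintype A] [CommSemiring R]
    {p : R[X]} {n : ℕ} (hp : p.natDegree < n) (f : A → R) :
    ∑ a, p.eval (f a) = ∑ ℓ ∈ range n, p.coeff ℓ * ∑ a, f a ^ ℓ := by
  simp_rw [eval_eq_sum_range' hp, mul_sum]
  exact sum_comm

lemma exists_natDegree_lt_eval_eq_ite (M : ℕ) :
    ∃ p : ℚ[X], p.natDegree < M + 1 ∧ ∀ j ≤ M, p.eval (j : ℚ) = if j = 0 then 0 else 1 := by
  have hinj : Set.InjOn (fun j : ℕ => (j : ℚ)) (range (M + 1)) :=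
    fun _ _ _ _ h => Nat.cast_injective h
  set p := Lagrange.interpolate (range (M + 1)) (fun j : ℕ => (j : ℚ))
    (fun j => if j = 0 then 0 else 1)
  refine ⟨p, ?_, fun j hj => ?_⟩
  · have hdeg : p.degree < #(range (M + 1)) := Lagrange.degree_interpolate_lt _ hinj
    rw [card_range] at hdeg
    rcases eq_or_ne p 0 with hp0 | hp0
    · simp [hp0]
    · exact (natDegree_lt_iff_degree_lt hp0).mpr hdeg
  · exact Lagrange.eval_interpolate_at_node _ hinj (mem_range.mpr (Nat.lt_succ_of_le hj))

lemma cast_card_filter_ne_zero_eq {A : Type*} [Fintype A] {p : ℚ[X]} {M : ℕ}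
    (hdeg : p.natDegree < M + 1) (hp : ∀ j ≤ M, p.eval (j : ℚ) = if j = 0 then 0 else 1)
    (f : A → ℕ) (hf : ∀ a, f a ≤ M) :
    (#{a | f a ≠ 0} : ℚ) = ∑ ℓ ∈ range (M + 1), p.coeff ℓ * ((∑ a, f a ^ ℓ : ℕ) : ℚ) := by
  push_cast
  rw [← sum_eval_eq_sum_coeff_mul_sum_pow hdeg]
  simp [hp _ (hf _), ← sum_boole]

lemma card_filter_ne_zero_eq_of_sum_pow_eq {A B : Type*} [Fintype A] [Fintype B]
    (f : A → ℕ) (g : B → ℕ) (h : ∀ ℓ, 0 < ℓ → ∑ a, f a ^ ℓ = ∑ b, g b ^ ℓ) :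
    #{a | f a ≠ 0} = #{b | g b ≠ 0} := by
  set M := ∑ a, f a + ∑ b, g b
  have hf : ∀ a, f a ≤ M := fun a =>
    (single_le_sum (fun _ _ => Nat.zero_le _) (mem_univ a)).trans (Nat.le_add_right _ _)
  have hg : ∀ b, g b ≤ M := fun b =>
    (single_le_sum (fun _ _ => Nat.zero_le _) (mem_univ b)).trans (Nat.le_add_left _ _)
  obtain ⟨p, hdeg, hp⟩ := exists_natDegree_lt_eval_eq_ite M
  have hcoeff : p.coeff 0 = 0 := by
    rw [coeff_zero_eq_eval_zero]
    exact_mod_cast hp 0 M.zero_le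
  rw [← Nat.cast_inj (R := ℚ), cast_card_filter_ne_zero_eq hdeg hp f hf,
    cast_card_filter_ne_zero_eq hdeg hp g hg]
  refine sum_congr rfl fun ℓ _ => ?_
  rcases Nat.eq_zero_or_pos ℓ with rfl | hℓ
  · simp [hcoeff]
  · rw [h ℓ hℓ]

end PowerSums

namespace SimpleGraph

variable {ι : Type*} {T : SimpleGraph ι}

lemma Reachable.map_of_forall_adj {β : Type*} {G' : SimpleGraph β} (f : ι → β)
    (hf : ∀ ⦃x y⦄, T.Adj x y → G'.Reachable (f x) (f y)) {u v : ι} (h : T.Reachable u v) :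
    G'.Reachable (f u) (f v) := by
  obtain ⟨p⟩ := h
  induction p with
  | nil => rfl
  | cons hxy _ ih => exact (hf hxy).trans ih

lemma Connected.induce_image {β : Type*} {G' : SimpleGraph β} (f : T →g G') {S : Set ι}
    (h : (T.induce S).Connected) : (G'.induce (f '' S)).Connected :=
  h.map (⟨fun v => ⟨f v, v.1, v.2, rfl⟩, fun hab => f.map_adj hab⟩ :
      T.induce S →g G'.induce (f '' S))
    (by rintro ⟨_, v, hv, rfl⟩; exact ⟨⟨v, hv⟩, rfl⟩)

namespace IsTree

variable (hT : T.IsTree)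
include hT

lemma support_subset_of_isPath {S : Set ι} (hS : (T.induce S).Connected) {u v : ι}
    (hu : u ∈ S) (hv : v ∈ S) {p : T.Walk u v} (hp : p.IsPath) : ∀ w ∈ p.support, w ∈ S := by
  classical
  obtain ⟨q⟩ := hS.preconnected ⟨u, hu⟩ ⟨v, hv⟩
  let q' := q.map (Embedding.induce S).toHom
  rw [(hT.existsUnique_path u v).unique hp q'.bypass_isPath]
  intro w hw
  obtain ⟨w', -, rfl⟩ :=
    List.mem_map.mp (Walk.support_map _ _ ▸ q'.support_bypass_subset_support hw)
  exact w'.2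

lemma connected_induce_inter {A B : Set ι} (hA : (T.induce A).Connected)
    (hB : (T.induce B).Connected) (hAB : (A ∩ B).Nonempty) : (T.induce (A ∩ B)).Connected := by
  obtain ⟨z, hz⟩ := hAB
  refine induce_connected_of_patches z hz fun {v} hv => ?_
  obtain ⟨p, hp⟩ := (hT.existsUnique_path z v).exists
  refine ⟨{w | w ∈ p.support}, fun w hw => ⟨?_, ?_⟩, p.start_mem_support, p.end_mem_support,
    p.connected_induce_support.preconnected _ _⟩
  · exact hT.support_subset_of_isPath hA hz.1 hv.1 hp w hw
  · exact hT.support_subset_of_isPath hB hz.2 hv.2 hp w hw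

lemma not_adj_of_mem_diff {A B : Set ι} (hA : (T.induce A).Connected)
    (hB : (T.induce B).Connected) (hAB : (A ∩ B).Nonempty) {u v : ι} (hu : u ∈ A \ B)
    (hv : v ∈ B \ A) : ¬ T.Adj u v := by
  intro huv
  obtain ⟨z, hz⟩ := hAB
  obtain ⟨p, hp⟩ := (hT.existsUnique_path z u).exists
  have hvp : v ∉ p.support := fun h => hv.2 (hT.support_subset_of_isPath hA hz.1 hu.1 hp v h)
  refine hu.2 (hT.support_subset_of_isPath hB hz.2 hv.1 (hp.concat hvp huv) u ?_)
  simp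

lemma inter_inter_nonempty {A B C : Set ι} (hA : (T.induce A).Connected)
    (hB : (T.induce B).Connected) (hC : (T.induce C).Connected) (hAB : (A ∩ B).Nonempty)
    (hAC : (A ∩ C).Nonempty) (hBC : (B ∩ C).Nonempty) : (A ∩ B ∩ C).Nonempty := by
  obtain ⟨a, haA, haC⟩ := hAC
  obtain ⟨b, hbB, hbC⟩ := hBC
  by_contra hABC
  have hnot : ∀ w, w ∈ A → w ∈ B → w ∈ C → False := fun w h₁ h₂ h₃ => hABC ⟨w, ⟨h₁, h₂⟩, h₃⟩
  obtain ⟨p, hp⟩ := (hT.existsUnique_path a b).exists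
  have hpC := hT.support_subset_of_isPath hC haC hbC hp
  have hpAB := hT.support_subset_of_isPath
    (induce_union_connected hA.preconnected hB.preconnected hAB) (Or.inl haA) (Or.inr hbB) hp
  -- the path from `a` to `b` runs in `C ∩ (A ∪ B)`; where it leaves `A` it steps from `A \ B`
  -- straight into `B \ A`
  obtain ⟨d, hd, hdA, hdA'⟩ := p.exists_boundary_dart A haA fun hbA => hnot b hbA hbB hbC
  have h₁ := p.dart_fst_mem_support_of_mem_darts hd
  have h₂ := p.dart_snd_mem_support_of_mem_darts hd
  refine hT.not_adj_of_mem_diff hA hB hAB ⟨hdA, fun h => hnot _ hdA h (hpC _ h₁)⟩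
    ⟨(hpAB _ h₂).resolve_left hdA', hdA'⟩ d.adj

lemma exists_forall_mem_of_pairwise_inter_nonempty {J : Type*} (F : Finset J) (S : J → Set ι)
    (hS : ∀ j ∈ F, (T.induce (S j)).Connected)
    (hF : ∀ j ∈ F, ∀ k ∈ F, (S j ∩ S k).Nonempty) : ∃ t, ∀ j ∈ F, t ∈ S j := by
  classical
  induction F using Finset.induction_on generalizing S with
  | empty => exact ⟨hT.connected.nonempty.some, by simp⟩
  | @insert a F haF ih =>
    have hS' : ∀ j ∈ F, (T.induce (S j)).Connected := fun j hj => hS j (by simp [hj])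
    have hF' : ∀ j ∈ F, ∀ k ∈ F, (S j ∩ S k).Nonempty :=
      fun j hj k hk => hF j (by simp [hj]) k (by simp [hk])
    have hSa := hS a (by simp)
    have hFa : ∀ j ∈ F, (S j ∩ S a).Nonempty := fun j hj => hF j (by simp [hj]) a (by simp)
    rcases F.eq_empty_or_nonempty with rfl | ⟨j₀, hj₀⟩
    · obtain ⟨t, ht, -⟩ := hF a (by simp) a (by simp)
      exact ⟨t, by simpa using ht⟩
    obtain ⟨t, ht⟩ := ih (fun j => S j ∩ S a)
      (fun j hj => hT.connected_induce_inter (hS' j hj) hSa (hFa j hj))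
      fun j hj k hk => Set.Nonempty.mono (fun _ hw => ⟨⟨hw.1.1, hw.2⟩, hw.1.2, hw.2⟩)
        (hT.inter_inter_nonempty (hS' j hj) (hS' k hk) hSa (hF' j hj k hk) (hFa j hj) (hFa k hk))
    refine ⟨t, ?_⟩
    simp only [Finset.mem_insert, forall_eq_or_imp]
    exact ⟨(ht j₀ hj₀).2, fun j hj => (ht j hj).1⟩

end IsTree

lemma IsAcyclic.isBridge_of_retraction {α : Type*} {G : SimpleGraph α} (hT : T.IsAcyclic)
    (g : ι → α) (f : α → ι) (hfg : ∀ t, f (g t) = t)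
    (hf : ∀ ⦃x y⦄, G.Adj x y → f x = f y ∨ T.Adj (f x) (f y) ∧ x = g (f x) ∧ y = g (f y))
    {a b : ι} (hab : T.Adj a b) : G.IsBridge s(g a, g b) := by
  refine fun hr => isAcyclic_iff_forall_adj_isBridge.mp hT hab ?_
  simpa only [hfg] using hr.map_of_forall_adj f fun x y hxy => by
    rw [deleteEdges_adj, Set.mem_singleton_iff] at hxy
    rcases hf hxy.1 with hxy' | ⟨hT', hx, hy⟩
    · rw [hxy']
    refine Adj.reachable ((deleteEdges_adj ..).mpr ⟨hT', fun he => hxy.2 ?_⟩)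
    rw [hx, hy, ← Sym2.map_mk, Set.mem_singleton_iff.mp he, Sym2.map_mk]

variable (T) {J : Type*} (att : J → ι)

def starGlue : SimpleGraph (ι ⊕ J × ι) where
  Adj
    | .inl s, .inl t => T.Adj s t
    | .inl s, .inr (j, t) => s = att j ∧ t = att j
    | .inr (j, s), .inl t => s = att j ∧ t = att j
    | .inr (i, s), .inr (j, t) => i = j ∧ T.Adj s t
  symm := by
    constructor
    rintro (s | ⟨i, s⟩) (t | ⟨j, t⟩) h
    exacts [h.symm, h.symm, h.symm, ⟨h.1.symm, h.2.symm⟩]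
  loopless := by
    constructor
    rintro (s | ⟨i, s⟩) h
    exacts [T.irrefl h, T.irrefl h.2]

variable {T att}

@[simp] lemma starGlue_adj_inl_inl {s t : ι} :
    (starGlue T att).Adj (.inl s) (.inl t) ↔ T.Adj s t := .rfl

@[simp] lemma starGlue_adj_inl_inr {s t : ι} {j : J} :
    (starGlue T att).Adj (.inl s) (.inr (j, t)) ↔ s = att j ∧ t = att j := .rfl

@[simp] lemma starGlue_adj_inr_inl {s t : ι} {j : J} :
    (starGlue T att).Adj (.inr (j, s)) (.inl t) ↔ s = att j ∧ t = att j := .rfl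

@[simp] lemma starGlue_adj_inr_inr {s t : ι} {i j : J} :
    (starGlue T att).Adj (.inr (i, s)) (.inr (j, t)) ↔ i = j ∧ T.Adj s t := .rfl

variable (T att)

def starGlueInl : T →g starGlue T att := ⟨Sum.inl, id⟩

def starGlueInr (j : J) : T →g starGlue T att := ⟨fun t => .inr (j, t), fun h => ⟨rfl, h⟩⟩

@[simp] lemma starGlueInr_apply (j : J) (t : ι) : starGlueInr T att j t = .inr (j, t) := rfl

variable {T}

lemma connected_induce_starGlue {S : Set ι} (hS : (T.induce S).Connected) {P : J → Prop}
    (hP : ∀ j, P j → att j ∈ S) :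
    ((starGlue T att).induce {n | Sum.elim (· ∈ S) (fun p => P p.1 ∧ p.2 ∈ S) n}).Connected := by
  obtain ⟨⟨t₀, ht₀⟩⟩ := hS.nonempty
  have hbase := hS.induce_image (starGlueInl T att)
  refine induce_connected_of_patches (.inl t₀) ht₀ ?_
  rintro (t | ⟨j, t⟩) ht
  · exact ⟨_, by rintro _ ⟨s, hs, rfl⟩; exact hs, Set.mem_image_of_mem _ ht₀,
      Set.mem_image_of_mem _ ht, hbase.preconnected _ _⟩
  · refine ⟨_, ?_, .inl (Set.mem_image_of_mem _ ht₀), .inr (Set.mem_image_of_mem _ ht.2),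
      (connected_induce_union hbase.preconnected
        (hS.induce_image (starGlueInr T att j)).preconnected
        (Set.mem_image_of_mem _ (hP j ht.1)) (Set.mem_image_of_mem _ (hP j ht.1))
        ⟨rfl, rfl⟩).preconnected _ _⟩
    rintro _ (⟨s, hs, rfl⟩ | ⟨s, hs, rfl⟩)
    exacts [hs, ⟨ht.1, hs⟩]

lemma connected_induce_starGlue_copy {S : Set ι} (hS : (T.induce S).Connected) (j : J) :
    ((starGlue T att).induce
      {n | Sum.elim (fun _ => False) (fun p => p.1 = j ∧ p.2 ∈ S) n}).Connected := by
  have hset : {n | Sum.elim (fun _ => False) (fun p => p.1 = j ∧ p.2 ∈ S) n} =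
      starGlueInr T att j '' S := by
    ext (t | ⟨i, t⟩) <;> simp [eq_comm, and_comm]
  rw [hset]
  exact hS.induce_image _

lemma connected_starGlue (hT : T.Connected) : (starGlue T att).Connected := by
  obtain ⟨t₀⟩ := hT.nonempty
  have hbase : ∀ t, (starGlue T att).Reachable (.inl t₀) (.inl t) :=
    fun t => (hT.preconnected t₀ t).map (starGlueInl T att)
  refine (connected_iff_exists_forall_reachable _).mpr ⟨.inl t₀, ?_⟩
  rintro (t | ⟨j, t⟩)
  · exact hbase t
  · have hattach : (starGlue T att).Adj (.inl (att j)) (.inr (j, att j)) := ⟨rfl, rfl⟩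
    exact (hbase (att j)).trans <| hattach.reachable.trans <|
      (hT.preconnected (att j) t).map (starGlueInr T att j)

lemma isBridge_starGlue_attach (j : J) :
    (starGlue T att).IsBridge s(.inl (att j), .inr (j, att j)) := by
  classical
  refine IsAcyclic.isBridge_of_retraction (T := (⊤ : SimpleGraph Bool))
    (IsAcyclic.of_card_le_two (by simp)) (fun b => if b then .inr (j, att j) else .inl (att j))
    (Sum.elim (fun _ => false) fun p => decide (p.1 = j)) (by simp) ?_ (a := false) (b := true)
    (by simp)
  rintro (x | ⟨k, x⟩) (y | ⟨k', y⟩) hxy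
  all_goals simp only [starGlue_adj_inl_inl, starGlue_adj_inl_inr, starGlue_adj_inr_inl,
    starGlue_adj_inr_inr] at hxy
  · simp
  · obtain ⟨rfl, rfl⟩ := hxy
    by_cases hk : k' = j <;> simp [hk]
  · obtain ⟨rfl, rfl⟩ := hxy
    by_cases hk : k = j <;> simp [hk]
  · simp [hxy.1]

lemma IsAcyclic.isBridge_starGlue_copy (hT : T.IsAcyclic) (j : J) {s t : ι} (h : T.Adj s t) :
    (starGlue T att).IsBridge s(.inr (j, s), .inr (j, t)) := by
  classical
  refine hT.isBridge_of_retraction (G := starGlue T att) (fun t => .inr (j, t))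
    (Sum.elim (fun _ => att j) fun p => if p.1 = j then p.2 else att j) (fun _ => if_pos rfl)
    ?_ h
  rintro (x | ⟨k, x⟩) (y | ⟨k', y⟩) hxy
  all_goals simp only [starGlue_adj_inl_inl, starGlue_adj_inl_inr, starGlue_adj_inr_inl,
    starGlue_adj_inr_inr] at hxy
  · simp
  · obtain ⟨rfl, rfl⟩ := hxy
    by_cases hk : k' = j <;> simp [hk]
  · obtain ⟨rfl, rfl⟩ := hxy
    by_cases hk : k = j <;> simp [hk]
  · obtain ⟨rfl, hxy⟩ := hxy
    by_cases hk : k = j <;> simp [hk, hxy]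

lemma isAcyclic_starGlue (hT : T.IsAcyclic) : (starGlue T att).IsAcyclic := by
  refine isAcyclic_iff_forall_adj_isBridge.mpr ?_
  rintro (s | ⟨i, s⟩) (t | ⟨j, t⟩) h
  · exact hT.isBridge_of_retraction Sum.inl (Sum.elim id fun p => att p.1)
      (fun _ => rfl) (by rintro (x | ⟨k, x⟩) (y | ⟨k', y⟩) hxy <;> simp_all) h
  · obtain ⟨rfl, rfl⟩ := h
    exact isBridge_starGlue_attach att j
  · obtain ⟨rfl, rfl⟩ := h
    rw [Sym2.eq_swap]
    exact isBridge_starGlue_attach att i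
  · obtain ⟨rfl, h⟩ := h
    exact hT.isBridge_starGlue_copy att i h

lemma isTree_starGlue (hT : T.IsTree) : (starGlue T att).IsTree :=
  ⟨connected_starGlue att hT.connected, isAcyclic_starGlue att hT.isAcyclic⟩

end SimpleGraph

namespace TreeDecomp

variable {V V' : Type*} {G : SimpleGraph V} {G' : SimpleGraph V'}

def comap (D : TreeDecomp G) (f : G' →g G) : TreeDecomp G' where
  ι := D.ι
  T := D.T
  tree := D.tree
  bag t := f ⁻¹' D.bag t
  covers_vertex v := D.covers_vertex (f v)
  covers_edge _ _ h := D.covers_edge (f.map_adj h)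
  bags_connected v := D.bags_connected (f v)

lemma exists_bag_superset_of_isClique (D : TreeDecomp G) (K : Finset V)
    (hK : G.IsClique (K : Set V)) : ∃ t, ↑K ⊆ D.bag t := by
  refine D.tree.exists_forall_mem_of_pairwise_inter_nonempty K (fun v => {t | v ∈ D.bag t})
    (fun v _ => D.bags_connected v) fun u hu v hv => ?_
  rcases eq_or_ne u v with rfl | huv
  · obtain ⟨t, ht⟩ := D.covers_vertex u
    exact ⟨t, ht, ht⟩
  · exact D.covers_edge (hK hu hv huv)

end TreeDecomp

lemma TreewidthAtMost.comap {V V' : Type*} [Finite V] {G : SimpleGraph V} {G' : SimpleGraph V'}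
    {k : ℕ} (h : TreewidthAtMost G k) (f : G' →g G) (hf : Function.Injective f) :
    TreewidthAtMost G' k := by
  obtain ⟨D, hD⟩ := h
  exact ⟨D.comap f, fun t =>
    (Set.ncard_le_ncard_of_injOn f (fun _ hv => hv) hf.injOn).trans (hD t)⟩

lemma treewidthAtMost_card {V : Type*} (G : SimpleGraph V) : TreewidthAtMost G (Nat.card V) := by
  refine ⟨⟨PUnit, ⊥, .of_subsingleton, fun _ => Set.univ, fun _ => ⟨.unit, trivial⟩,
    fun _ _ _ => ⟨.unit, trivial, trivial⟩, fun v => ?_⟩, fun _ => by simp⟩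
  have : Nonempty ↥{t : PUnit | v ∈ Set.univ} := ⟨⟨.unit, trivial⟩⟩
  exact SimpleGraph.IsTree.of_subsingleton.connected

lemma treewidthAtMost_treewidth {V : Type*} [Finite V] (G : SimpleGraph V) :
    TreewidthAtMost G (treewidth G) :=
  Nat.sInf_mem (s := {k | TreewidthAtMost G k}) ⟨_, treewidthAtMost_card G⟩

lemma card_hom_eq_of_treewidthAtMost {W₁ W₂ : Type*} {G₁ : SimpleGraph W₁}
    {G₂ : SimpleGraph W₂} {k : ℕ}
    (h : ∀ (α : Type) [Fintype α] (T : SimpleGraph α), treewidth T ≤ k →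
      Nat.card (T →g G₁) = Nat.card (T →g G₂))
    {U : Type*} [Fintype U] {F : SimpleGraph U} (hF : TreewidthAtMost F k) :
    Nat.card (F →g G₁) = Nat.card (F →g G₂) := by
  let e := SimpleGraph.Iso.map (Fintype.equivFin U) F
  have := h _ _ (Nat.sInf_le (hF.comap e.symm.toHom e.symm.injective))
  rwa [Nat.card_congr (e.homCongr .refl), Nat.card_congr (e.homCongr .refl)]

namespace SimpleGraph

noncomputable section GluedCopies

open Finset

variable {V W : Type*} (H : SimpleGraph V) (X : Set V) (G : SimpleGraph W) {ℓ : ℕ}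

open Classical in
def gluedCopy (i : Fin ℓ) : V ↪ ↥X ⊕ Fin ℓ × ↥Xᶜ where
  toFun v := if h : v ∈ X then .inl ⟨v, h⟩ else .inr (i, ⟨v, h⟩)
  inj' u v huv := by
    by_cases hu : u ∈ X <;> by_cases hv : v ∈ X <;> simp_all [Subtype.ext_iff]

variable {X} in
@[simp] lemma gluedCopy_of_mem (i : Fin ℓ) {v : V} (hv : v ∈ X) :
    gluedCopy X i v = .inl ⟨v, hv⟩ := dif_pos hv

variable {X} in
@[simp] lemma gluedCopy_of_notMem (i : Fin ℓ) {v : V} (hv : v ∉ X) :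
    gluedCopy X i v = .inr (i, ⟨v, hv⟩) := dif_neg hv

/-- The graph `F_ℓ(H,X)` of the paper. -/
def gluedCopies (ℓ : ℕ) : SimpleGraph (↥X ⊕ Fin ℓ × ↥Xᶜ) := ⨆ i, H.map (gluedCopy X i)

variable {H X} in
lemma gluedCopies_adj {u v : ↥X ⊕ Fin ℓ × ↥Xᶜ} :
    (gluedCopies H X ℓ).Adj u v ↔
      ∃ i x y, H.Adj x y ∧ gluedCopy X i x = u ∧ gluedCopy X i y = v := by
  simp [gluedCopies]

def gluedCopyHom (i : Fin ℓ) : H →g gluedCopies H X ℓ :=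
  ⟨gluedCopy X i, fun h => gluedCopies_adj.mpr ⟨i, _, _, h, rfl, rfl⟩⟩

abbrev Extensions (a : ↥X → W) : Type _ := {h : H →g G // ∀ x : ↥X, h x = a x}

variable {H X G} in
lemma Extensions.sumElim_gluedCopy {a : ↥X → W} (e : Fin ℓ → Extensions H X G a) (i : Fin ℓ)
    (v : V) : Sum.elim a (fun p => (e p.1).1 p.2) (gluedCopy X i v) = (e i).1 v := by
  by_cases hv : v ∈ X
  · simp [hv, (e i).2 ⟨v, hv⟩]
  · simp [hv]

def homGluedCopiesEquiv :
    (gluedCopies H X ℓ →g G) ≃ Σ a : ↥X → W, Fin ℓ → Extensions H X G a where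
  toFun φ := ⟨φ ∘ Sum.inl, fun i => ⟨φ.comp (gluedCopyHom H X i), fun x => by simp [gluedCopyHom]⟩⟩
  invFun e :=
    { toFun := Sum.elim e.1 fun p => (e.2 p.1).1 p.2
      map_rel' := fun {u v} huv => by
        obtain ⟨i, x, y, hxy, rfl, rfl⟩ := gluedCopies_adj.mp huv
        simpa only [Extensions.sumElim_gluedCopy] using (e.2 i).1.map_adj hxy }
  left_inv φ := by
    ext (x | ⟨i, w⟩)
    · rfl
    · simp [gluedCopyHom, gluedCopy_of_notMem i w.2]
  right_inv := by
    rintro ⟨a, e⟩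
    refine Sigma.ext rfl (heq_of_eq (funext fun i => Subtype.ext (DFunLike.ext _ _ fun v => ?_)))
    exact Extensions.sumElim_gluedCopy e i v

lemma card_hom_gluedCopies [Finite V] [Fintype W] [Fintype ↥X] [DecidableEq ↥X]
    (ℓ : ℕ) :
    Nat.card (gluedCopies H X ℓ →g G) = ∑ a : ↥X → W, Nat.card (Extensions H X G a) ^ ℓ := by
  rw [Nat.card_congr (homGluedCopiesEquiv H X G), Nat.card_sigma]
  simp [Nat.card_fun]

lemma card_answers [Finite V] [Fintype W] [Fintype ↥X] [DecidableEq ↥X] :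
    Nat.card (Answers H X G) = #{a | Nat.card (Extensions H X G a) ≠ 0} := by
  rw [← Fintype.card_subtype, ← Nat.card_eq_fintype_card]
  refine Nat.card_congr (Equiv.subtypeEquivRight fun a => ?_)
  rw [Nat.card_ne_zero, and_iff_left (inferInstance : Finite _)]
  exact ⟨fun ⟨h, hh⟩ => ⟨h, hh⟩, fun ⟨h, hh⟩ => ⟨h, hh⟩⟩

end GluedCopies

end SimpleGraph

namespace TreeDecomp

open SimpleGraph

variable {V : Type*} {H : SimpleGraph V} {X : Set V} {ℓ : ℕ}
variable (D : TreeDecomp H) (ρ : ↥Xᶜ → D.ι)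

/-- The nodes whose bags contain a given vertex of `gluedCopies H X ℓ`. The copy `(i, r)` of the
decomposition tree, hung at `r`, carries the `i`-th copy of the vertices `w ∉ X` with `ρ w = r`,
together with their neighbours in `X`. -/
def gluedCopiesNodes : ↥X ⊕ Fin ℓ × ↥Xᶜ → Set (D.ι ⊕ (Fin ℓ × D.ι) × D.ι)
  | .inl x => {n | Sum.elim (↑x ∈ D.bag ·)
      (fun p => (∃ w : ↥Xᶜ, H.Adj x w ∧ ρ w = p.1.2) ∧ ↑x ∈ D.bag p.2) n}
  | .inr (i, w) => {n | Sum.elim (fun _ => False) (fun p => p.1 = (i, ρ w) ∧ ↑w ∈ D.bag p.2) n}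

variable {D ρ} in
lemma exists_mem_gluedCopiesNodes_of_adj (hρ : ∀ w w' : ↥Xᶜ, H.Adj w w' → ρ w = ρ w')
    (i : Fin ℓ) {x y : V} (hxy : H.Adj x y) {t : D.ι} (hx : x ∈ D.bag t) (hy : y ∈ D.bag t)
    (hyX : y ∉ X) :
    ∃ n, n ∈ D.gluedCopiesNodes ρ (gluedCopy X i x) ∧
      n ∈ D.gluedCopiesNodes ρ (gluedCopy X i y) := by
  refine ⟨.inr ((i, ρ ⟨y, hyX⟩), t), ?_,
    by simp [gluedCopy_of_notMem i hyX, gluedCopiesNodes, hy]⟩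
  by_cases hxX : x ∈ X
  · simp only [gluedCopy_of_mem i hxX, gluedCopiesNodes]
    exact ⟨⟨⟨y, hyX⟩, hxy, rfl⟩, hx⟩
  · simp only [gluedCopy_of_notMem i hxX, gluedCopiesNodes]
    exact ⟨by rw [hρ ⟨x, hxX⟩ ⟨y, hyX⟩ hxy], hx⟩

def gluedCopies (hρ : ∀ w w' : ↥Xᶜ, H.Adj w w' → ρ w = ρ w')
    (hρX : ∀ (x : ↥X) (w : ↥Xᶜ), H.Adj x w → ↑x ∈ D.bag (ρ w)) (ℓ : ℕ) :
    TreeDecomp (H.gluedCopies X ℓ) where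
  ι := D.ι ⊕ (Fin ℓ × D.ι) × D.ι
  T := starGlue D.T Prod.snd
  tree := isTree_starGlue _ D.tree
  bag n := {u | n ∈ D.gluedCopiesNodes ρ u}
  covers_vertex := by
    rintro (x | ⟨i, w⟩)
    · obtain ⟨t, ht⟩ := D.covers_vertex x
      exact ⟨.inl t, ht⟩
    · obtain ⟨t, ht⟩ := D.covers_vertex w
      exact ⟨.inr ((i, ρ w), t), rfl, ht⟩
  covers_edge u v huv := by
    obtain ⟨i, x, y, hxy, rfl, rfl⟩ := gluedCopies_adj.mp huv
    obtain ⟨t, hx, hy⟩ := D.covers_edge hxy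
    by_cases hyX : y ∈ X
    · by_cases hxX : x ∈ X
      · exact ⟨.inl t, by simpa [gluedCopy_of_mem i hxX, gluedCopiesNodes] using hx,
          by simpa [gluedCopy_of_mem i hyX, gluedCopiesNodes] using hy⟩
      · exact (exists_mem_gluedCopiesNodes_of_adj hρ i hxy.symm hy hx hxX).imp
          fun _ => And.symm
    · exact exists_mem_gluedCopiesNodes_of_adj hρ i hxy hx hy hyX
  bags_connected := by
    rintro (x | ⟨i, w⟩)
    · exact connected_induce_starGlue _ (D.bags_connected x)
        (P := fun p : Fin ℓ × D.ι => ∃ w : ↥Xᶜ, H.Adj x w ∧ ρ w = p.2)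
        (by rintro ⟨i, r⟩ ⟨w, hw, rfl⟩; exact hρX x w hw)
    · exact connected_induce_starGlue_copy _ (D.bags_connected w) (i, ρ w)

variable {D ρ} in
lemma ncard_bag_gluedCopies_le [Finite V] (hρ : ∀ w w' : ↥Xᶜ, H.Adj w w' → ρ w = ρ w')
    (hρX : ∀ (x : ↥X) (w : ↥Xᶜ), H.Adj x w → ↑x ∈ D.bag (ρ w))
    (n : (D.gluedCopies ρ hρ hρX ℓ).ι) :
    ((D.gluedCopies ρ hρ hρX ℓ).bag n).ncard ≤ (D.bag (Sum.elim id Prod.snd n)).ncard := by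
  refine Set.ncard_le_ncard_of_injOn (Sum.elim Subtype.val fun p => ↑p.2) ?_ ?_
  · rcases n with t | ⟨⟨i, r⟩, t⟩ <;> rintro (x | ⟨j, w⟩) hu
    exacts [hu, hu.elim, hu.2, hu.2]
  · rcases n with t | ⟨⟨i, r⟩, t⟩ <;> rintro (x | ⟨j, w⟩) hu (x' | ⟨j', w'⟩) hu' h <;>
      simp only [Sum.elim_inl, Sum.elim_inr] at h
    · exact congrArg _ (Subtype.ext h)
    · exact hu'.elim
    · exact hu.elim
    · exact hu.elim
    · exact congrArg _ (Subtype.ext h)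
    · exact absurd (h ▸ x.2) w'.2
    · exact absurd (h ▸ x'.2) w.2
    · obtain ⟨rfl, -⟩ := Prod.ext_iff.mp (hu.1.symm.trans hu'.1)
      rw [Subtype.ext h]

lemma exists_root_of_extGraph [Finite V] (D : TreeDecomp (extGraph H X)) :
    ∃ ρ : ↥Xᶜ → D.ι, (∀ w w' : ↥Xᶜ, H.Adj w w' → ρ w = ρ w') ∧
      ∀ (x : ↥X) (w : ↥Xᶜ), H.Adj x w → ↑x ∈ D.bag (ρ w) := by
  have hroot (c : (H.induce Xᶜ).ConnectedComponent) : ∃ t, ∀ (x : ↥X) (w : ↥Xᶜ),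
      H.Adj x w → (H.induce Xᶜ).connectedComponentMk w = c → ↑x ∈ D.bag t := by
    set N : Set V := {x | ∃ (_ : x ∈ X) (w : ↥Xᶜ), H.Adj x w ∧
      (H.induce Xᶜ).connectedComponentMk w = c}
    obtain ⟨t, ht⟩ := D.exists_bag_superset_of_isClique (Set.toFinite N).toFinset <| by
      rintro x hx y hy hxy
      simp only [Set.Finite.coe_toFinset, N, Set.mem_ofPred_eq] at hx hy
      obtain ⟨hxX, w₁, hxw₁, rfl⟩ := hx
      obtain ⟨hyX, w₂, hyw₂, hw⟩ := hy
      exact .inr ⟨hxy, hxX, hyX, w₁, w₂, hxw₁, hyw₂, ConnectedComponent.eq.mp hw.symm⟩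
    exact ⟨t, fun x w hxw hw => ht ((Set.Finite.mem_toFinset _).mpr ⟨x.2, w, hxw, hw⟩)⟩
  choose r hr using hroot
  exact ⟨fun w => r ((H.induce Xᶜ).connectedComponentMk w),
    fun w w' h => congrArg r (ConnectedComponent.connectedComponentMk_eq_of_adj h),
    fun x w h => hr _ x w h rfl⟩

end TreeDecomp

lemma treewidthAtMost_gluedCopies {V : Type*} [Finite V] {H : SimpleGraph V} {X : Set V} {k : ℕ}
    (h : TreewidthAtMost (extGraph H X) k) (ℓ : ℕ) : TreewidthAtMost (H.gluedCopies X ℓ) k := by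
  obtain ⟨D, hD⟩ := h
  obtain ⟨ρ, hρ, hρX⟩ := D.exists_root_of_extGraph
  have hle : H ≤ extGraph H X := fun _ _ => .inl
  exact ⟨(D.comap (.ofLE hle)).gluedCopies ρ hρ hρX ℓ,
    fun n => (TreeDecomp.ncard_bag_gluedCopies_le _ _ n).trans (hD _)⟩

theorem stmt19_general {V : Type*} [Fintype V]
    (H : SimpleGraph V) (X : Set V)
    {W₁ W₂ : Type} [Fintype W₁] [Fintype W₂]
    (G : SimpleGraph W₁) (G' : SimpleGraph W₂)
    (hwl : ∀ (α : Type) [Fintype α] (T : SimpleGraph α),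
      treewidth T ≤ treewidth (extGraph H X) →
      Nat.card (T →g G) = Nat.card (T →g G')) :
    Nat.card ↥(Answers H X G) = Nat.card ↥(Answers H X G') := by
  classical
  rw [SimpleGraph.card_answers, SimpleGraph.card_answers]
  refine card_filter_ne_zero_eq_of_sum_pow_eq _ _ fun ℓ _ => ?_
  rw [← SimpleGraph.card_hom_gluedCopies, ← SimpleGraph.card_hom_gluedCopies]
  exact card_hom_eq_of_treewidthAtMost hwl
    (treewidthAtMost_gluedCopies (treewidthAtMost_treewidth _) ℓ)

/-- **upper bound on the WL-dimension.** Let `(H,X)` be a counting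
minimal (formalised via the relevant property that every endomorphism of `H` mapping
`X` surjectively onto `X` is an automorphism) connected conjunctive query with at
least one free variable.  If two graphs `G` and `G'` satisfy
`|Hom(T,G)| = |Hom(T,G')|` for every (finite) graph `T` of treewidth at most the
extension width `tw(Γ(H,X))`, then `|Ans((H,X),G)| = |Ans((H,X),G')|`. -/
theorem stmt19 {V : Type*} [Fintype V]
    (H : SimpleGraph V) (X : Set V)
    (hconn : H.Connected) (hne : X.Nonempty)
    (hmin : ∀ h : H →g H, Set.MapsTo ⇑h X X → Set.SurjOn ⇑h X X →
      ∃ g : H ≃g H, ∀ v, g v = h v)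
    {W₁ W₂ : Type} [Fintype W₁] [Fintype W₂]
    (G : SimpleGraph W₁) (G' : SimpleGraph W₂)
    (hwl : ∀ (α : Type) [Fintype α] (T : SimpleGraph α),
      treewidth T ≤ treewidth (extGraph H X) →
      Nat.card (T →g G) = Nat.card (T →g G')) :
    Nat.card ↥(Answers H X G) = Nat.card ↥(Answers H X G') :=
  stmt19_general H X G G' hwl
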